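/- arXiv:2103.08354 — 3 statements merged into one kernel-verified Lean document; each statement's English description precedes it below -/
import Mathlib

section
/- Let δ ≥ 100 be a real number and set m = ⌈√δ⌉. Let Δ₁, …, Δ_m be independent, identically distributed real random variables, each having the law of an exponential random variable with rate 1 conditioned on lying in [0, δ] (i.e., the probability measure with density e^{−x}/(1 − e^{−δ}) on [0, δ]). Then P[Δ₁ + Δ₂ + ⋯ + Δ_m > m/4] ≥ 1 − 2^{3 − m/2}. -/
open MeasureTheory ProbabilityTheory Real Set

/-! By independence and the exponential Chernoff bound with parameter `-1`,
`P[Δ₁ + ⋯ + Δ_m ≤ m/4] ≤ e^{m/4} E[e^{-Δ₁}]^m`. For the truncated exponential law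
`E[e^{-Δ₁}] = (1 + e^{-δ})/2 ≤ 51/101` once `δ ≥ 100`, and `e^{1/4} · 51/101 ≤ 2^{-1/2}`,
so the lower tail is at most `2^{-m/2}`. -/

lemma integral_Icc_exp_neg_mul {a δ : ℝ} (ha : a ≠ 0) (hδ : 0 ≤ δ) :
    ∫ x in Icc 0 δ, exp (-(a * x)) = (1 - exp (-(a * δ))) / a := by
  rw [integral_Icc_eq_integral_Ioc, ← intervalIntegral.integral_of_le hδ]
  simp_rw [← neg_mul]
  rw [intervalIntegral.integral_comp_mul_left (fun x => exp x) (neg_ne_zero.2 ha), integral_exp]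
  simp only [mul_zero, exp_zero, smul_eq_mul]
  field_simp
  ring

lemma one_sub_exp_neg_pos {δ : ℝ} (hδ : 0 < δ) : 0 < 1 - exp (-δ) := by
  simpa using hδ

noncomputable def truncatedExpMeasure (δ : ℝ) : Measure ℝ :=
  (volume.restrict (Icc 0 δ)).withDensity
    fun x => ENNReal.ofReal (exp (-x) / (1 - exp (-δ)))

section truncatedExpMeasure

variable {δ : ℝ}

lemma integral_truncatedExpMeasure (hδ : 0 < δ) (g : ℝ → ℝ) :
    ∫ x, g x ∂truncatedExpMeasure δ = ∫ x in Icc 0 δ, exp (-x) / (1 - exp (-δ)) * g x := by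
  have := one_sub_exp_neg_pos hδ
  rw [truncatedExpMeasure, integral_withDensity_eq_integral_toReal_smul (by fun_prop)
    (ae_of_all _ fun _ => ENNReal.ofReal_lt_top)]
  refine setIntegral_congr_fun measurableSet_Icc fun x _ => ?_
  rw [ENNReal.toReal_ofReal (by positivity), smul_eq_mul]

lemma isProbabilityMeasure_truncatedExpMeasure (hδ : 0 < δ) :
    IsProbabilityMeasure (truncatedExpMeasure δ) := by
  have hc := one_sub_exp_neg_pos hδ
  have hint : IntegrableOn (fun x => exp (-x) / (1 - exp (-δ))) (Icc 0 δ) :=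
    (continuous_exp.comp continuous_neg).div_const _ |>.integrableOn_Icc
  constructor
  rw [truncatedExpMeasure, withDensity_apply _ MeasurableSet.univ, Measure.restrict_univ,
    ← ofReal_integral_eq_lintegral_ofReal hint (ae_of_all _ fun x => by positivity),
    integral_div]
  have hmass := integral_Icc_exp_neg_mul one_ne_zero hδ.le
  simp only [one_mul, div_one] at hmass
  rw [hmass, div_self hc.ne', ENNReal.ofReal_one]

lemma ae_mem_Icc_truncatedExpMeasure : ∀ᵐ x ∂truncatedExpMeasure δ, x ∈ Icc 0 δ :=
  (withDensity_absolutelyContinuous _ _).ae_le (ae_restrict_mem measurableSet_Icc)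

lemma mgf_id_truncatedExpMeasure_neg_one (hδ : 0 < δ) :
    mgf id (truncatedExpMeasure δ) (-1) = (1 + exp (-δ)) / 2 := by
  have hc := (one_sub_exp_neg_pos hδ).ne'
  have hdens (x : ℝ) : exp (-x) / (1 - exp (-δ)) * exp (-1 * x)
      = exp (-(2 * x)) / (1 - exp (-δ)) := by
    rw [div_mul_eq_mul_div, ← exp_add]
    ring_nf
  simp only [mgf, id, integral_truncatedExpMeasure hδ, hdens]
  rw [integral_div, integral_Icc_exp_neg_mul two_ne_zero hδ.le]
  field_simp
  rw [show 2 * δ = δ + δ by ring, neg_add, exp_add]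
  ring

end truncatedExpMeasure

section Chernoff

variable {Ω ι : Type*} [MeasurableSpace Ω] {μ : Measure Ω}

lemma integrable_exp_mul_of_nonneg [IsFiniteMeasure μ] {X : Ω → ℝ} (hX : AEMeasurable X μ)
    (hX0 : 0 ≤ᵐ[μ] X) {t : ℝ} (ht : t ≤ 0) : Integrable (fun ω => exp (t * X ω)) μ := by
  refine (integrable_const 1).mono' (hX.const_mul t).exp.aestronglyMeasurable ?_
  filter_upwards [hX0] with ω hω
  rw [norm_of_nonneg (exp_pos _).le, exp_le_one_iff]
  exact mul_nonpos_of_nonpos_of_nonneg ht hω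

lemma measureReal_sum_le_le_of_mgf_le [IsFiniteMeasure μ] [Fintype ι] {X : ι → Ω → ℝ}
    (hindep : iIndepFun X μ) (hX : ∀ i, AEMeasurable (X i) μ) (hX0 : ∀ i, 0 ≤ᵐ[μ] X i)
    {t q : ℝ} (ht : t ≤ 0) (hq : ∀ i, mgf (X i) μ t ≤ q) (a : ℝ) :
    μ.real {ω | ∑ i, X i ω ≤ a} ≤ exp (-t * a) * q ^ Fintype.card ι := by
  have hS0 : 0 ≤ᵐ[μ] ∑ i, X i := by
    filter_upwards [ae_all_iff.2 hX0] with ω hω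
    simpa only [Finset.sum_apply, Pi.zero_apply] using Finset.sum_nonneg fun i _ => hω i
  have hint := integrable_exp_mul_of_nonneg (Finset.aemeasurable_sum _ fun i _ => hX i) hS0 ht
  calc μ.real {ω | ∑ i, X i ω ≤ a} = μ.real {ω | (∑ i, X i) ω ≤ a} := by
        simp only [Finset.sum_apply]
    _ ≤ exp (-t * a) * mgf (∑ i, X i) μ t := measure_le_le_exp_mul_mgf a ht hint
    _ = exp (-t * a) * ∏ i, mgf (X i) μ t := by rw [hindep.mgf_sum₀ hX]
    _ ≤ exp (-t * a) * q ^ Fintype.card ι := by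
        gcongr
        calc ∏ i, mgf (X i) μ t ≤ ∏ _i : ι, q :=
              Finset.prod_le_prod (fun _ _ => mgf_nonneg) fun i _ => hq i
          _ = q ^ Fintype.card ι := by rw [Finset.prod_const, Finset.card_univ]

end Chernoff

lemma ofReal_one_sub_le_measure_lt {Ω : Type*} [MeasurableSpace Ω] {μ : Measure Ω}
    [IsProbabilityMeasure μ] {f : Ω → ℝ} (hf : AEMeasurable f μ) {a b : ℝ}
    (h : μ.real {ω | f ω ≤ a} ≤ b) : ENNReal.ofReal (1 - b) ≤ μ {ω | a < f ω} := by
  have hb : 0 ≤ b := measureReal_nonneg.trans h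
  have hcompl : {ω | a < f ω} = {ω | f ω ≤ a}ᶜ := by ext; simp
  rw [hcompl, prob_compl_eq_one_sub₀ (nullMeasurableSet_le hf aemeasurable_const),
    ENNReal.ofReal_sub _ hb, ENNReal.ofReal_one]
  gcongr
  exact (ENNReal.le_ofReal_iff_toReal_le (measure_ne_top _ _) hb).2 h

lemma exp_div_four_mul_pow_le (m : ℕ) :
    exp (m / 4) * (51 / 101) ^ m ≤ (2 : ℝ) ^ ((3 : ℝ) - m / 2) := by
  have hexp : exp (1 / 2) ≤ 1.65 := by
    have h := exp_one_lt_d9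
    have hsq : exp (1 / 2) ^ 2 = exp 1 := by rw [← exp_nat_mul]; norm_num
    nlinarith [exp_pos (1 / 2)]
  have hstep : exp (1 / 4) * (51 / 101) ≤ (2 : ℝ) ^ (-(1 / 2) : ℝ) := by
    rw [← pow_le_pow_iff_left₀ (by positivity) (by positivity) two_ne_zero, mul_pow,
      ← rpow_natCast ((2 : ℝ) ^ _), ← rpow_mul zero_le_two, ← exp_nat_mul]
    norm_num
    linarith
  calc exp (m / 4) * (51 / 101) ^ m = (exp (1 / 4) * (51 / 101)) ^ m := by
        rw [mul_pow, ← exp_nat_mul]; ring_nf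
    _ ≤ ((2 : ℝ) ^ (-(1 / 2) : ℝ)) ^ m := by gcongr
    _ = (2 : ℝ) ^ (-(m : ℝ) / 2) := by
        rw [← rpow_natCast, ← rpow_mul zero_le_two]; ring_nf
    _ ≤ (2 : ℝ) ^ ((3 : ℝ) - m / 2) := by
        gcongr
        · norm_num
        · linarith

theorem stmt_4_general {Ω : Type*} [MeasurableSpace Ω] (μ : Measure Ω) [IsProbabilityMeasure μ]
    (δ : ℝ) (hδ : 100 ≤ δ) (m : ℕ)
    (Δ : Fin m → Ω → ℝ)
    (hindep : iIndepFun Δ μ)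
    (hlaw : ∀ i, Measure.map (Δ i) μ =
      (volume.restrict (Set.Icc (0 : ℝ) δ)).withDensity
        (fun x => ENNReal.ofReal (Real.exp (-x) / (1 - Real.exp (-δ))))) :
    ENNReal.ofReal (1 - 2 ^ ((3 : ℝ) - (m : ℝ) / 2))
      ≤ μ {ω | (m : ℝ) / 4 < ∑ i, Δ i ω} := by
  have hδ0 : 0 < δ := by linarith
  have hlaw' (i : Fin m) : μ.map (Δ i) = truncatedExpMeasure δ := hlaw i
  have := isProbabilityMeasure_truncatedExpMeasure hδ0
  have hmeas (i : Fin m) : AEMeasurable (Δ i) μ :=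
    .of_map_ne_zero (by rw [hlaw' i]; exact IsProbabilityMeasure.ne_zero _)
  have hnonneg (i : Fin m) : 0 ≤ᵐ[μ] Δ i := by
    refine ae_of_ae_map (p := (0 ≤ ·)) (hmeas i) ?_
    rw [hlaw' i]
    filter_upwards [ae_mem_Icc_truncatedExpMeasure] with x hx using hx.1
  have hmgf (i : Fin m) : mgf (Δ i) μ (-1) ≤ 51 / 101 := by
    rw [← mgf_id_map (hmeas i), hlaw' i, mgf_id_truncatedExpMeasure_neg_one hδ0]
    have : exp (-δ) ≤ 1 / 101 := by
      rw [exp_neg, inv_le_comm₀ (exp_pos δ) (by norm_num)]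
      linarith [add_one_le_exp δ]
    linarith
  have hchernoff := measureReal_sum_le_le_of_mgf_le hindep hmeas hnonneg (by norm_num) hmgf (m / 4)
  rw [neg_neg, one_mul, Fintype.card_fin] at hchernoff
  exact ofReal_one_sub_le_measure_lt (Finset.aemeasurable_fun_sum _ fun i _ => hmeas i)
    (hchernoff.trans (exp_div_four_mul_pow_le m))

/-- Lemma 4.3 (probability bound): for `δ ≥ 100` and `m = ⌈√δ⌉`, if `Δ₁,…,Δ_m` are
i.i.d. with the law of an `Exp(1)` variable conditioned on `[0, δ]` (density
`e^{−x}/(1 − e^{−δ})` on `[0, δ]`), then `P[Δ₁ + ⋯ + Δ_m > m/4] ≥ 1 − 2^{3 − m/2}`. -/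
theorem stmt_4 {Ω : Type*} [MeasurableSpace Ω] (μ : Measure Ω) [IsProbabilityMeasure μ]
    (δ : ℝ) (hδ : 100 ≤ δ) (m : ℕ) (hm : m = ⌈Real.sqrt δ⌉₊)
    (Δ : Fin m → Ω → ℝ)
    (hindep : iIndepFun Δ μ)
    (hlaw : ∀ i, Measure.map (Δ i) μ =
      (volume.restrict (Set.Icc (0 : ℝ) δ)).withDensity
        (fun x => ENNReal.ofReal (Real.exp (-x) / (1 - Real.exp (-δ))))) :
    ENNReal.ofReal (1 - 2 ^ ((3 : ℝ) - (m : ℝ) / 2))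
      ≤ μ {ω | (m : ℝ) / 4 < ∑ i, Δ i ω} :=
  stmt_4_general μ δ hδ m Δ hindep hlaw
end

section
/- For every real λ > 0 there exists a constant C > 0 such that for every real q ≥ 10: Σ_{i=1}^∞ 2^{λ · √(i·q + 1) · log₂(i·q + 1)} · (2^{3 − q/2})^{i−1} ≤ 2^{C·q}. -/
/-!
Since `log x ≤ 4 x^{1/4}`, the exponent `λ √x log₂ x` grows like `x^{3/4}`, so it is at most
`x / 16` plus a constant depending only on `λ`. With `x = (i + 1) q + 1` and `q ≥ 10` this
linear term is absorbed by the factor `2^{(3 - q/2) i}`, leaving `2^{q/16 + O(1)} · 2^{-i}`,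
a geometric series with sum `2^{O(q)}`.
-/

open Real

lemma summable_and_tsum_le_of_le_geometric {f : ℕ → ℝ} {c r : ℝ}
    (hr0 : 0 ≤ r) (hr1 : r < 1) (hf0 : ∀ i, 0 ≤ f i) (hf : ∀ i, f i ≤ c * r ^ i) :
    Summable f ∧ ∑' i, f i ≤ c / (1 - r) := by
  have hg : Summable fun i ↦ c * r ^ i := (summable_geometric_of_lt_one hr0 hr1).mul_left c
  have hsum : Summable f := .of_nonneg_of_le hf0 hf hg
  refine ⟨hsum, ?_⟩
  calc ∑' i, f i ≤ ∑' i, c * r ^ i := hsum.tsum_le_tsum hf hg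
    _ = c / (1 - r) := by
        rw [tsum_mul_left, tsum_geometric_of_lt_one hr0 hr1, div_eq_mul_inv]

lemma mul_pow_le_mul_pow_succ_add {b t ε : ℝ} (hb : 0 ≤ b) (ht : 0 ≤ t) (hε : 0 < ε)
    (n : ℕ) :
    b * t ^ n ≤ ε * t ^ (n + 1) + b ^ (n + 1) / ε ^ n := by
  rcases le_total b (ε * t) with hbt | htb
  · have : b * t ^ n ≤ ε * t ^ (n + 1) := by
      rw [pow_succ', ← mul_assoc]; exact mul_le_mul_of_nonneg_right hbt (by positivity)
    linarith [show 0 ≤ b ^ (n + 1) / ε ^ n by positivity]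
  · have htb' : t ≤ b / ε := by rwa [le_div_iff₀ hε, mul_comm]
    have : b * t ^ n ≤ b ^ (n + 1) / ε ^ n := by
      rw [pow_succ', mul_div_assoc, ← div_pow]
      exact mul_le_mul_of_nonneg_left (pow_le_pow_left₀ ht htb' n) hb
    linarith [show 0 ≤ ε * t ^ (n + 1) by positivity]

lemma sqrt_mul_logb_two_le {x : ℝ} (hx : 0 ≤ x) :
    √x * logb 2 x ≤ 8 * x ^ (3 / 4 : ℝ) := by
  have hlog : log x ≤ 4 * x ^ (1 / 4 : ℝ) := by
    have := log_le_rpow_div hx (by norm_num : (0 : ℝ) < 1 / 4)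
    linarith [show x ^ (1 / 4 : ℝ) / (1 / 4) = 4 * x ^ (1 / 4 : ℝ) by ring]
  have hlogb : logb 2 x ≤ 8 * x ^ (1 / 4 : ℝ) := by
    rw [logb, div_le_iff₀ (log_pos one_lt_two)]
    nlinarith [log_two_gt_d9, rpow_nonneg hx (1 / 4 : ℝ)]
  calc √x * logb 2 x ≤ x ^ (1 / 2 : ℝ) * (8 * x ^ (1 / 4 : ℝ)) := by
        rw [sqrt_eq_rpow]; exact mul_le_mul_of_nonneg_left hlogb (by positivity)
    _ = 8 * x ^ (3 / 4 : ℝ) := by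
        rw [mul_left_comm, ← rpow_add' hx (by norm_num)]; norm_num

lemma mul_sqrt_mul_logb_two_le {a ε x : ℝ} (ha : 0 ≤ a) (hε : 0 < ε) (hx : 0 ≤ x) :
    a * √x * logb 2 x ≤ ε * x + (8 * a) ^ 4 / ε ^ 3 := by
  set t := x ^ (1 / 4 : ℝ)
  have ht3 : x ^ (3 / 4 : ℝ) = t ^ 3 := by
    rw [← rpow_mul_natCast hx]; norm_num
  have ht4 : x = t ^ 4 := by
    rw [← rpow_mul_natCast hx]; norm_num
  calc a * √x * logb 2 x ≤ a * (8 * x ^ (3 / 4 : ℝ)) := by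
        rw [mul_assoc]; exact mul_le_mul_of_nonneg_left (sqrt_mul_logb_two_le hx) ha
    _ = 8 * a * t ^ 3 := by rw [ht3]; ring
    _ ≤ ε * t ^ 4 + (8 * a) ^ 4 / ε ^ 3 :=
        mul_pow_le_mul_pow_succ_add (by positivity) (by positivity) hε 3
    _ = ε * x + (8 * a) ^ 4 / ε ^ 3 := by rw [← ht4]

lemma two_rpow_mul_sqrt_logb_mul_pow_le {l q : ℝ} (hl : 0 ≤ l) (hq : 10 ≤ q) (i : ℕ) :
    (2 : ℝ) ^ (l * √((i + 1 : ℝ) * q + 1) * logb 2 ((i + 1 : ℝ) * q + 1)) *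
        ((2 : ℝ) ^ ((3 : ℝ) - q / 2)) ^ i
      ≤ (2 : ℝ) ^ ((q + 1) / 16 + (8 * l) ^ 4 / (1 / 16) ^ 3) * (1 / 2) ^ i := by
  have hexp := mul_sqrt_mul_logb_two_le hl (by norm_num : (0 : ℝ) < 1 / 16)
    (by positivity : (0 : ℝ) ≤ (i + 1 : ℝ) * q + 1)
  rw [← rpow_mul_natCast zero_le_two, ← rpow_add two_pos,
    show (1 / 2 : ℝ) = 2 ^ (-1 : ℝ) by norm_num, ← rpow_mul_natCast zero_le_two,
    ← rpow_add two_pos]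
  apply rpow_le_rpow_of_exponent_le one_le_two
  -- the coefficient of `i` in the exponent becomes `q / 16 + 3 - q / 2 ≤ -1`
  nlinarith [(Nat.cast_nonneg i : (0 : ℝ) ≤ i)]

/-- Bound on the total expected time per subsubproblem between consecutive soft walls
(Section 4): for every `λ > 0` there is a constant `C > 0` such that for all `q ≥ 10`,
`Σ_{i=1}^∞ 2^{λ·√(iq+1)·log₂(iq+1)} · (2^{3−q/2})^{i−1} ≤ 2^{Cq}` (the series being
summable; here the index is shifted so `i : ℕ` corresponds to the original index `i + 1`). -/
theorem stmt_10 (l : ℝ) (hl : 0 < l) :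
    ∃ C : ℝ, 0 < C ∧ ∀ q : ℝ, 10 ≤ q →
      Summable (fun i : ℕ =>
        (2 : ℝ) ^ (l * Real.sqrt ((i + 1 : ℝ) * q + 1) * Real.logb 2 ((i + 1 : ℝ) * q + 1)) *
          ((2 : ℝ) ^ ((3 : ℝ) - q / 2)) ^ i) ∧
      (∑' i : ℕ,
        (2 : ℝ) ^ (l * Real.sqrt ((i + 1 : ℝ) * q + 1) * Real.logb 2 ((i + 1 : ℝ) * q + 1)) *
          ((2 : ℝ) ^ ((3 : ℝ) - q / 2)) ^ i) ≤ (2 : ℝ) ^ (C * q) := by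
  have hK : 0 ≤ (8 * l) ^ 4 / (1 / 16 : ℝ) ^ 3 := by positivity
  refine ⟨1 + (8 * l) ^ 4 / (1 / 16) ^ 3, by positivity, fun q hq ↦ ?_⟩
  obtain ⟨hsum, hle⟩ := summable_and_tsum_le_of_le_geometric (by norm_num) (by norm_num)
    (fun i ↦ by positivity) (two_rpow_mul_sqrt_logb_mul_pow_le hl.le hq)
  refine ⟨hsum, hle.trans ?_⟩
  rw [show (1 : ℝ) - 1 / 2 = 2⁻¹ by norm_num, div_inv_eq_mul, ← rpow_add_one two_ne_zero]
  exact rpow_le_rpow_of_exponent_le one_le_two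
    (by nlinarith [mul_le_mul_of_nonneg_left (by linarith : 1 ≤ q) hK])
end

section
/- For all real numbers λ ≥ 1 and μ ≥ 1 there exists a constant C > 0 such that for every real δ ≥ 1: Σ_{k=1}^∞ (1 − 2^{−μδ})^{k−1} · 2^{−μδ} · (5k + 1)^{λ·√δ} ≤ 2^{C · δ · √δ}. -/
private lemma rpow_le_exp_aux (x a s : ℝ) (hx : 0 < x) (ha : 0 < a) (hs : 0 < s) :
    x ^ s ≤ (s / a) ^ s * Real.exp (a * x) := by
  have hsa : 0 < s / a := div_pos hs ha
  have h1 : Real.log (x * (a / s)) ≤ x * (a / s) - 1 :=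
    Real.log_le_sub_one_of_pos (by positivity)
  have h2 : Real.log x + Real.log (a / s) = Real.log (x * (a / s)) :=
    (Real.log_mul (ne_of_gt hx) (by positivity)).symm
  have h3 : Real.log (a / s) = - Real.log (s / a) := by
    rw [Real.log_div (ne_of_gt ha) (ne_of_gt hs), Real.log_div (ne_of_gt hs) (ne_of_gt ha)]
    ring
  have hkey : Real.log x * s ≤ Real.log (s / a) * s + a * x := by
    have h4 : Real.log x - Real.log (s / a) ≤ x * (a / s) := by
      nlinarith [h1, h2, h3]
    have h5 : (Real.log x - Real.log (s / a)) * s ≤ x * (a / s) * s :=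
      mul_le_mul_of_nonneg_right h4 hs.le
    have h6 : x * (a / s) * s = a * x := by field_simp
    nlinarith [h5, h6]
  calc x ^ s = Real.exp (Real.log x * s) := Real.rpow_def_of_pos hx s
    _ ≤ Real.exp (Real.log (s / a) * s + a * x) := Real.exp_le_exp.mpr hkey
    _ = (s / a) ^ s * Real.exp (a * x) := by
        rw [Real.exp_add, Real.rpow_def_of_pos hsa]

private lemma self_le_rpow_aux (x : ℝ) (hx : 0 ≤ x) : x ≤ (2 : ℝ) ^ (2 * x) := by
  have h := Real.add_one_le_exp (Real.log 2 * (2 * x))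
  have hlog := Real.log_two_gt_d9
  rw [Real.rpow_def_of_pos (by norm_num : (0:ℝ) < 2)]
  nlinarith [h, hlog]

set_option maxHeartbeats 1000000 in
/-- Final bound in the expected-running-time analysis of Section 4: for all `λ, μ ≥ 1`
there is a constant `C > 0` such that for every `δ ≥ 1`,
`Σ_{k=1}^∞ (1 − 2^{−μδ})^{k−1} · 2^{−μδ} · (5k+1)^{λ√δ} ≤ 2^{C·δ·√δ}` (the series being
summable; here the index is shifted so `k : ℕ` corresponds to the original index `k + 1`). -/
theorem stmt_13 (l m : ℝ) (hl : 1 ≤ l) (hm : 1 ≤ m) :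
    ∃ C : ℝ, 0 < C ∧ ∀ δ : ℝ, 1 ≤ δ →
      Summable (fun k : ℕ =>
        (1 - (2 : ℝ) ^ (-(m * δ))) ^ k * (2 : ℝ) ^ (-(m * δ)) *
          (5 * (k + 1 : ℝ) + 1) ^ (l * Real.sqrt δ)) ∧
      (∑' k : ℕ,
        (1 - (2 : ℝ) ^ (-(m * δ))) ^ k * (2 : ℝ) ^ (-(m * δ)) *
          (5 * (k + 1 : ℝ) + 1) ^ (l * Real.sqrt δ)) ≤ (2 : ℝ) ^ (C * δ * Real.sqrt δ) := by
  refine ⟨m * l + 4 * l ^ 2 + 3 * l + 4, by nlinarith, fun δ hδ => ?_⟩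
  set p : ℝ := (2 : ℝ) ^ (-(m * δ)) with hp_def
  set s : ℝ := l * Real.sqrt δ with hs_def
  have hδ0 : (0 : ℝ) < δ := lt_of_lt_of_le one_pos hδ
  have hsqrt1 : 1 ≤ Real.sqrt δ := by
    rw [show (1:ℝ) = Real.sqrt 1 by simp]; exact Real.sqrt_le_sqrt hδ
  have hsqrt_sq : Real.sqrt δ * Real.sqrt δ = δ := Real.mul_self_sqrt hδ0.le
  have hs1 : 1 ≤ s := by nlinarith
  have hs0 : 0 < s := lt_of_lt_of_le one_pos hs1
  have hp_pos : 0 < p := Real.rpow_pos_of_pos (by norm_num) _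
  have hmδ : 1 ≤ m * δ := by nlinarith
  have hp_half : p ≤ 1 / 2 := by
    have : p ≤ (2 : ℝ) ^ (-(1:ℝ)) := by
      apply Real.rpow_le_rpow_of_exponent_le (by norm_num); linarith
    rw [Real.rpow_neg_one] at this; linarith
  have hr0 : 0 ≤ 1 - p := by linarith
  have hr1 : 1 - p < 1 := by linarith
  -- dominating geometric series
  set q : ℝ := Real.exp (-(p / 2)) with hq_def
  have hq0 : 0 ≤ q := (Real.exp_pos _).le
  have hq1 : q < 1 := Real.exp_lt_one_iff.mpr (by linarith)
  set B : ℝ := p * (6 : ℝ) ^ s * (2 * s / p) ^ s * Real.exp (p / 2) with hB_def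
  have hB0 : 0 ≤ B := by positivity
  have hterm : ∀ k : ℕ,
      (1 - p) ^ k * p * (5 * (k + 1 : ℝ) + 1) ^ s ≤ B * q ^ k := by
    intro k
    have hk1 : (0 : ℝ) < (k : ℝ) + 1 := by positivity
    have h6 : (5 * ((k : ℝ) + 1) + 1) ^ s ≤ (6 * ((k : ℝ) + 1)) ^ s := by
      apply Real.rpow_le_rpow (by positivity) (by linarith) hs0.le
    have hsplit : ((6 : ℝ) * ((k : ℝ) + 1)) ^ s = (6 : ℝ) ^ s * ((k : ℝ) + 1) ^ s :=
      Real.mul_rpow (by norm_num) hk1.le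
    have hexp : ((k : ℝ) + 1) ^ s ≤ (s / (p / 2)) ^ s * Real.exp ((p / 2) * ((k : ℝ) + 1)) :=
      rpow_le_exp_aux _ _ _ hk1 (by linarith) hs0
    have hdiv : s / (p / 2) = 2 * s / p := by ring
    have hgeo : (1 - p) ^ k * Real.exp ((p / 2) * (k : ℝ)) ≤ q ^ k := by
      have h1 : (1 - p) * Real.exp (p / 2) ≤ q := by
        have h2 : 1 - p ≤ Real.exp (-p) := by
          have := Real.add_one_le_exp (-p); linarith
        calc (1 - p) * Real.exp (p / 2) ≤ Real.exp (-p) * Real.exp (p / 2) :=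
              mul_le_mul_of_nonneg_right h2 (Real.exp_pos _).le
          _ = q := by rw [← Real.exp_add, hq_def]; congr 1; ring
      calc (1 - p) ^ k * Real.exp ((p / 2) * (k : ℝ))
          = ((1 - p) * Real.exp (p / 2)) ^ k := by
            rw [mul_pow, ← Real.exp_nat_mul]; ring_nf
        _ ≤ q ^ k := pow_le_pow_left₀ (by positivity) h1 k
    have hexpand : Real.exp ((p / 2) * ((k : ℝ) + 1)) =
        Real.exp (p / 2) * Real.exp ((p / 2) * (k : ℝ)) := by
      rw [← Real.exp_add]; ring_nf
    calc (1 - p) ^ k * p * (5 * ((k : ℝ) + 1) + 1) ^ s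
        ≤ (1 - p) ^ k * p * ((6 : ℝ) ^ s * (((2 * s / p) ^ s) * Real.exp ((p / 2) * ((k : ℝ) + 1)))) := by
          apply mul_le_mul_of_nonneg_left _ (by positivity)
          rw [hdiv] at hexp
          calc (5 * ((k : ℝ) + 1) + 1) ^ s ≤ (6 * ((k : ℝ) + 1)) ^ s := h6
            _ = (6 : ℝ) ^ s * ((k : ℝ) + 1) ^ s := hsplit
            _ ≤ (6 : ℝ) ^ s * (((2 * s / p) ^ s) * Real.exp ((p / 2) * ((k : ℝ) + 1))) := by
                apply mul_le_mul_of_nonneg_left hexp (by positivity)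
      _ = B * ((1 - p) ^ k * Real.exp ((p / 2) * (k : ℝ))) := by
          rw [hB_def, hexpand]; ring
      _ ≤ B * q ^ k := mul_le_mul_of_nonneg_left hgeo hB0
  have hgsum : Summable (fun k : ℕ => B * q ^ k) :=
    (summable_geometric_of_lt_one hq0 hq1).mul_left B
  have hfnonneg : ∀ k : ℕ, 0 ≤ (1 - p) ^ k * p * (5 * (k + 1 : ℝ) + 1) ^ s := by
    intro k
    have : (0:ℝ) ≤ (1-p) ^ k := pow_nonneg hr0 k
    positivity
  have hsummable : Summable (fun k : ℕ =>
      (1 - p) ^ k * p * (5 * (k + 1 : ℝ) + 1) ^ s) :=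
    Summable.of_nonneg_of_le hfnonneg hterm hgsum
  refine ⟨hsummable, ?_⟩
  have htsum_le : (∑' k : ℕ, (1 - p) ^ k * p * (5 * (k + 1 : ℝ) + 1) ^ s)
      ≤ B * (1 - q)⁻¹ := by
    calc (∑' k : ℕ, (1 - p) ^ k * p * (5 * (k + 1 : ℝ) + 1) ^ s)
        ≤ ∑' k : ℕ, B * q ^ k := Summable.tsum_le_tsum hterm hsummable hgsum
      _ = B * (1 - q)⁻¹ := by
          rw [tsum_mul_left, tsum_geometric_of_lt_one hq0 hq1]
  -- bound (1 - q)⁻¹ ≤ 4 / p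
  have hq_bound : (1 - q)⁻¹ ≤ 4 / p := by
    have ht : p / 2 ≤ 1 := by linarith
    have h1 : q ≤ 1 - p / 4 := by
      have he : Real.exp (p / 2) ≥ 1 + p / 2 := by
        have := Real.add_one_le_exp (p / 2); linarith
      have hq_eq : q = (Real.exp (p / 2))⁻¹ := by
        rw [hq_def, ← Real.exp_neg]
      rw [hq_eq]
      have h2 : (Real.exp (p / 2))⁻¹ ≤ (1 + p / 2)⁻¹ := by
        apply inv_anti₀ (by linarith) he
      have h3 : (1 + p / 2)⁻¹ ≤ 1 - p / 4 := by
        rw [inv_le_iff_one_le_mul₀ (by linarith)]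
        nlinarith
      linarith
    have h4 : p / 4 ≤ 1 - q := by linarith
    rw [inv_le_iff_one_le_mul₀ (by linarith)]
    rw [div_mul_eq_mul_div, le_div_iff₀ hp_pos]
    nlinarith
  have hB_bound : B * (1 - q)⁻¹ ≤ 4 * (6 : ℝ) ^ s * (2 * s / p) ^ s * Real.exp (p / 2) := by
    have h1 : B * (1 - q)⁻¹ ≤ B * (4 / p) := by
      apply mul_le_mul_of_nonneg_left hq_bound hB0
    have h2 : B * (4 / p) = 4 * (6 : ℝ) ^ s * (2 * s / p) ^ s * Real.exp (p / 2) := by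
      rw [hB_def]; field_simp
    linarith
  -- now bound each factor by a power of 2
  have h6s : (6 : ℝ) ^ s ≤ (2 : ℝ) ^ (3 * s) := by
    rw [Real.rpow_mul (by norm_num : (0:ℝ) ≤ 2)]
    apply Real.rpow_le_rpow (by norm_num) (by norm_num [Real.rpow_natCast]) hs0.le
  have hpinv : (2 * s / p) = 2 * s * (2 : ℝ) ^ (m * δ) := by
    rw [hp_def, Real.rpow_neg (by norm_num : (0:ℝ) ≤ 2)]
    field_simp
  have h2s : 2 * s ≤ (2 : ℝ) ^ (2 * (2 * s)) := self_le_rpow_aux (2 * s) (by linarith)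
  have hfactor : (2 * s / p) ^ s ≤ (2 : ℝ) ^ ((4 * s + m * δ) * s) := by
    have hle : 2 * s / p ≤ (2 : ℝ) ^ (4 * s + m * δ) := by
      rw [hpinv, Real.rpow_add (by norm_num : (0:ℝ) < 2)]
      apply mul_le_mul_of_nonneg_right _ (Real.rpow_pos_of_pos (by norm_num) _).le
      have : 2 * (2 * s) = 4 * s := by ring
      rw [this] at h2s; exact h2s
    calc (2 * s / p) ^ s ≤ ((2 : ℝ) ^ (4 * s + m * δ)) ^ s :=
          Real.rpow_le_rpow (by positivity) hle hs0.le
      _ = (2 : ℝ) ^ ((4 * s + m * δ) * s) := by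
          rw [← Real.rpow_mul (by norm_num : (0:ℝ) ≤ 2)]
  have hexp2 : Real.exp (p / 2) ≤ 4 := by
    have : Real.exp (p / 2) ≤ Real.exp 1 := Real.exp_le_exp.mpr (by linarith)
    have h9 := Real.exp_one_lt_d9
    linarith
  have hfinal : 4 * (6 : ℝ) ^ s * (2 * s / p) ^ s * Real.exp (p / 2)
      ≤ (2 : ℝ) ^ (4 + (3 * s + (4 * s + m * δ) * s)) := by
    have hstep : 4 * (6 : ℝ) ^ s * (2 * s / p) ^ s * Real.exp (p / 2)
        ≤ 16 * ((2 : ℝ) ^ (3 * s) * (2 : ℝ) ^ ((4 * s + m * δ) * s)) := by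
      have hstep' : 4 * (6 : ℝ) ^ s * (2 * s / p) ^ s * Real.exp (p / 2)
          ≤ 4 * ((2 : ℝ) ^ (3 * s)) * ((2 : ℝ) ^ ((4 * s + m * δ) * s)) * 4 := by
        gcongr
      linarith [hstep', (by ring : 4 * ((2 : ℝ) ^ (3 * s)) * ((2 : ℝ) ^ ((4 * s + m * δ) * s)) * 4
        = 16 * ((2 : ℝ) ^ (3 * s) * (2 : ℝ) ^ ((4 * s + m * δ) * s)))]
    have h16 : (16 : ℝ) = (2 : ℝ) ^ (4 : ℝ) := by
      rw [show (4:ℝ) = ((4:ℕ):ℝ) by norm_num, Real.rpow_natCast]; norm_num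
    calc 4 * (6 : ℝ) ^ s * (2 * s / p) ^ s * Real.exp (p / 2)
        ≤ 16 * ((2 : ℝ) ^ (3 * s) * (2 : ℝ) ^ ((4 * s + m * δ) * s)) := hstep
      _ = (2 : ℝ) ^ (4 + (3 * s + (4 * s + m * δ) * s)) := by
          rw [Real.rpow_add (by norm_num : (0:ℝ) < 2),
            Real.rpow_add (by norm_num : (0:ℝ) < 2), ← h16]
  have hexponent : 4 + (3 * s + (4 * s + m * δ) * s)
      ≤ (m * l + 4 * l ^ 2 + 3 * l + 4) * δ * Real.sqrt δ := by
    rw [hs_def]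
    have h1 : 0 ≤ l * Real.sqrt δ * (δ - 1) :=
      mul_nonneg (mul_nonneg (by linarith) (Real.sqrt_nonneg δ)) (by linarith)
    have h2 : 0 ≤ l ^ 2 * δ * (Real.sqrt δ - 1) :=
      mul_nonneg (mul_nonneg (by positivity) (by linarith)) (by linarith)
    have h3 : 1 ≤ δ * Real.sqrt δ := by nlinarith [hsqrt1, hδ]
    nlinarith [h1, h2, h3, hsqrt_sq]
  calc (∑' k : ℕ, (1 - p) ^ k * p * (5 * (k + 1 : ℝ) + 1) ^ s)
      ≤ B * (1 - q)⁻¹ := htsum_le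
    _ ≤ 4 * (6 : ℝ) ^ s * (2 * s / p) ^ s * Real.exp (p / 2) := hB_bound
    _ ≤ (2 : ℝ) ^ (4 + (3 * s + (4 * s + m * δ) * s)) := hfinal
    _ ≤ (2 : ℝ) ^ ((m * l + 4 * l ^ 2 + 3 * l + 4) * δ * Real.sqrt δ) :=
        Real.rpow_le_rpow_of_exponent_le (by norm_num) hexponent
end
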